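/- arXiv:1903.04277 — 2 statements merged into one kernel-verified Lean document; each statement's English description precedes it below -/
import Mathlib

section
/- Let Dom ⊆ ℝ^p be a convex closed set, let ψ : ℝ^p → ℝ be differentiable and σ-strongly convex with σ > 0, and let h : Dom → ℝ be convex such that at every x ∈ Dom there exists a subgradient of h of Euclidean norm at most G_h > 0. Fix z ∈ Dom and let y be the (unique) minimizer over x ∈ Dom of h(x) + D_ψ(x,z). Then there exists a subgradient g of h at y such that for all x ∈ Dom: ⟨y − x, g⟩ ≤ D_ψ(x,z) − D_ψ(x,y) − D_ψ(y,z). -/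
open scoped RealInnerProductSpace

noncomputable section

/-- Bregman divergence generated by `ψ` with gradient map `ψ'`. -/
def breg {d : ℕ} (ψ : EuclideanSpace ℝ (Fin d) → ℝ)
    (ψ' : EuclideanSpace ℝ (Fin d) → EuclideanSpace ℝ (Fin d))
    (x y : EuclideanSpace ℝ (Fin d)) : ℝ :=
  ψ x - ψ y - ⟪ψ' y, x - y⟫

/-!
The subgradient is `ψ' z - ψ' y`. The map `u ↦ D_ψ(u, z)` has gradient `ψ' y - ψ' z` at `y`,
so first-order optimality of `y` for `h + D_ψ(·, z)` along the segments from `y` into `Dom`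
makes the negative of that gradient a subgradient of `h` at `y`. The inequality is then the
three-point identity `D_ψ(x, z) - D_ψ(x, y) - D_ψ(y, z) = ⟪ψ' y - ψ' z, x - y⟫`, with equality.
-/

open Filter Set

theorem ConvexOn.sub_le_lineDeriv_of_isMinOn_add {E : Type*} [NormedAddCommGroup E]
    [NormedSpace ℝ E] {S : Set E} {h φ : E → ℝ} {y v : E} {D : ℝ}
    (hh : ConvexOn ℝ S h) (hmin : IsMinOn (h + φ) S y) (hy : y ∈ S) (hv : v ∈ S)
    (hφ : HasLineDerivAt ℝ φ D y (v - y)) : h y - h v ≤ D := by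
  refine ge_of_tendsto hφ.tendsto_slope_zero_right ?_
  filter_upwards [Ioc_mem_nhdsGT_of_mem (left_mem_Ico.2 one_pos)] with t ⟨ht0, ht1⟩
  have hseg : y + t • (v - y) = (1 - t) • y + t • v := by module
  have hmem : y + t • (v - y) ∈ S := hh.1.add_smul_sub_mem hy hv ⟨ht0.le, ht1⟩
  have hconv : h (y + t • (v - y)) ≤ (1 - t) * h y + t * h v := by
    rw [hseg]; exact hh.2 hy hv (by linarith) ht0.le (by ring)
  have hle : h y + φ y ≤ h (y + t • (v - y)) + φ (y + t • (v - y)) := hmin hmem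
  rw [smul_eq_mul, le_inv_mul_iff₀ ht0]
  nlinarith

section Bregman

variable {d : ℕ} (ψ : EuclideanSpace ℝ (Fin d) → ℝ)
  (ψ' : EuclideanSpace ℝ (Fin d) → EuclideanSpace ℝ (Fin d))

theorem breg_three_point (x y z : EuclideanSpace ℝ (Fin d)) :
    breg ψ ψ' x z - breg ψ ψ' x y - breg ψ ψ' y z = ⟪ψ' y - ψ' z, x - y⟫ := by
  have hsplit : x - z = (x - y) + (y - z) := by abel
  simp only [breg, hsplit, inner_add_right, inner_sub_left]
  ring

variable {ψ ψ'}

theorem hasGradientAt_breg_left {y : EuclideanSpace ℝ (Fin d)} (hψ : HasGradientAt ψ (ψ' y) y)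
    (z : EuclideanSpace ℝ (Fin d)) :
    HasGradientAt (fun u => breg ψ ψ' u z) (ψ' y - ψ' z) y := by
  rw [hasGradientAt_iff_hasFDerivAt, map_sub]
  have hlin : HasFDerivAt (fun u => ⟪ψ' z, u - z⟫)
      (InnerProductSpace.toDual ℝ _ (ψ' z)) y := by
    simpa [inner_sub_right] using
      ((InnerProductSpace.toDual ℝ _ (ψ' z)).hasFDerivAt.sub_const ⟪ψ' z, z⟫)
  exact (hψ.hasFDerivAt.sub_const (ψ z)).sub hlin

end Bregman

theorem statement_0_general {d : ℕ} (Dom : Set (EuclideanSpace ℝ (Fin d)))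
    (ψ : EuclideanSpace ℝ (Fin d) → ℝ)
    (ψ' : EuclideanSpace ℝ (Fin d) → EuclideanSpace ℝ (Fin d))
    (hψ : ∀ u, HasGradientAt ψ (ψ' u) u)
    (h : EuclideanSpace ℝ (Fin d) → ℝ) (hconv : ConvexOn ℝ Dom h)
    (z : EuclideanSpace ℝ (Fin d))
    (y : EuclideanSpace ℝ (Fin d)) (hy : y ∈ Dom)
    (hmin : ∀ u ∈ Dom, h y + breg ψ ψ' y z ≤ h u + breg ψ ψ' u z) :
    ∃ gy : EuclideanSpace ℝ (Fin d),
      (∀ v ∈ Dom, h y + ⟪gy, v - y⟫ ≤ h v) ∧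
      ∀ x ∈ Dom, ⟪y - x, gy⟫ ≤ breg ψ ψ' x z - breg ψ ψ' x y - breg ψ ψ' y z := by
  refine ⟨ψ' z - ψ' y, fun v hv => ?_, fun x _ => ?_⟩
  · have hopt := hconv.sub_le_lineDeriv_of_isMinOn_add (φ := fun u => breg ψ ψ' u z) hmin hy hv
      ((hasGradientAt_breg_left (hψ y) z).hasFDerivAt.hasLineDerivAt (v - y))
    rw [InnerProductSpace.toDual_apply_apply, ← neg_sub (ψ' z), inner_neg_left] at hopt
    linarith
  · rw [breg_three_point, ← neg_sub x y, ← neg_sub (ψ' y) (ψ' z), inner_neg_neg, real_inner_comm]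

theorem statement_0 {d : ℕ} (Dom : Set (EuclideanSpace ℝ (Fin d)))
    (hDconv : Convex ℝ Dom) (hDclosed : IsClosed Dom)
    (ψ : EuclideanSpace ℝ (Fin d) → ℝ)
    (ψ' : EuclideanSpace ℝ (Fin d) → EuclideanSpace ℝ (Fin d))
    (hψ : ∀ u, HasGradientAt ψ (ψ' u) u)
    (σ : ℝ) (hσ : 0 < σ)
    (hstrong : ∀ u v, ψ v + ⟪ψ' v, u - v⟫ + σ / 2 * ‖u - v‖ ^ 2 ≤ ψ u)
    (h : EuclideanSpace ℝ (Fin d) → ℝ) (hconv : ConvexOn ℝ Dom h)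
    (Gh : ℝ) (hGh : 0 < Gh)
    (hsub : ∀ u ∈ Dom, ∃ gu : EuclideanSpace ℝ (Fin d),
      ‖gu‖ ≤ Gh ∧ ∀ v ∈ Dom, h u + ⟪gu, v - u⟫ ≤ h v)
    (z : EuclideanSpace ℝ (Fin d)) (hz : z ∈ Dom)
    (y : EuclideanSpace ℝ (Fin d)) (hy : y ∈ Dom)
    (hmin : ∀ u ∈ Dom, h y + breg ψ ψ' y z ≤ h u + breg ψ ψ' u z) :
    ∃ gy : EuclideanSpace ℝ (Fin d),
      (∀ v ∈ Dom, h y + ⟪gy, v - y⟫ ≤ h v) ∧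
      ∀ x ∈ Dom, ⟪y - x, gy⟫ ≤ breg ψ ψ' x z - breg ψ ψ' x y - breg ψ ψ' y z :=
  statement_0_general Dom ψ ψ' hψ h hconv z y hy hmin
end
end

section
/- Let Dom ⊆ ℝ^p be a convex closed set, let ψ : ℝ^p → ℝ be differentiable and σ-strongly convex with σ > 0, and let h : Dom → ℝ be convex such that at every x ∈ Dom there exists a subgradient of h of Euclidean norm at most G_h > 0. Fix z ∈ Dom and let y be the (unique) minimizer over x ∈ Dom of h(x) + D_ψ(x,z). Then ‖y − z‖ ≤ G_h/σ. -/
open scoped RealInnerProductSpace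

noncomputable section

theorem statement_1 {d : ℕ} (Dom : Set (EuclideanSpace ℝ (Fin d)))
    (hDconv : Convex ℝ Dom) (hDclosed : IsClosed Dom)
    (ψ : EuclideanSpace ℝ (Fin d) → ℝ)
    (ψ' : EuclideanSpace ℝ (Fin d) → EuclideanSpace ℝ (Fin d))
    (hψ : ∀ u, HasGradientAt ψ (ψ' u) u)
    (σ : ℝ) (hσ : 0 < σ)
    (hstrong : ∀ u v, ψ v + ⟪ψ' v, u - v⟫ + σ / 2 * ‖u - v‖ ^ 2 ≤ ψ u)
    (h : EuclideanSpace ℝ (Fin d) → ℝ) (hconv : ConvexOn ℝ Dom h)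
    (Gh : ℝ) (hGh : 0 < Gh)
    (hsub : ∀ u ∈ Dom, ∃ gu : EuclideanSpace ℝ (Fin d),
      ‖gu‖ ≤ Gh ∧ ∀ v ∈ Dom, h u + ⟪gu, v - u⟫ ≤ h v)
    (z : EuclideanSpace ℝ (Fin d)) (hz : z ∈ Dom)
    (y : EuclideanSpace ℝ (Fin d)) (hy : y ∈ Dom)
    (hmin : ∀ u ∈ Dom, h y + breg ψ ψ' y z ≤ h u + breg ψ ψ' u z) :
    ‖y - z‖ ≤ Gh / σ := by

  set R := ‖y - z‖ with hR
  have hR0 : 0 ≤ R := norm_nonneg _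
  rcases eq_or_lt_of_le hR0 with hR0' | hRpos
  · rw [← hR0']; positivity
  -- subgradient bound : h z - h y ≤ Gh * R
  obtain ⟨g, hgnorm, hg⟩ := hsub z hz
  have hhz : h z - h y ≤ Gh * R := by
    have h1 := hg y hy
    have h2 : ⟪g, y - z⟫ ≥ -(Gh * R) := by
      have := abs_real_inner_le_norm g (y - z)
      have h3 : ‖g‖ * ‖y - z‖ ≤ Gh * R := by
        apply mul_le_mul hgnorm le_rfl (norm_nonneg _) hGh.le
      nlinarith [abs_le.mp this]
    nlinarith
  -- key inequality for each t ∈ (0,1)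
  have key : ∀ t : ℝ, 0 < t → t < 1 → σ * (1 - t / 2) * R ^ 2 ≤ Gh * R := by
    intro t ht0 ht1
    set u : EuclideanSpace ℝ (Fin d) := y + t • (z - y) with hu
    have huDom : u ∈ Dom := by
      have := hDconv hy hz (by linarith : (0:ℝ) ≤ 1 - t) ht0.le (by ring)
      convert this using 1
      rw [hu]
      module
    have hyu : y - u = t • (y - z) := by rw [hu]; module
    have huz : u - z = (1 - t) • (y - z) := by rw [hu]; module
    have hnyu : ‖y - u‖ = t * R := by
      rw [hyu, norm_smul, Real.norm_eq_abs, abs_of_pos ht0]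
    have hnuz : ‖u - z‖ = (1 - t) * R := by
      rw [huz, norm_smul, Real.norm_eq_abs, abs_of_pos (by linarith)]
    -- convexity of h
    have hconvu : h u ≤ (1 - t) * h y + t * h z := by
      have := hconv.2 hy hz (by linarith : (0:ℝ) ≤ 1 - t) ht0.le (by ring)
      have e : u = (1 - t) • y + t • z := by rw [hu]; module
      rw [e]; exact this
    -- monotonicity of gradient : ⟪ψ' u - ψ' z, y - z⟫ ≥ σ * (1 - t) * R ^ 2
    have hmono : σ * (1 - t) * R ^ 2 ≤ ⟪ψ' u - ψ' z, y - z⟫ := by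
      have h4 := hstrong u z
      have h5 := hstrong z u
      have h6 : ⟪ψ' u, z - u⟫ = -((1 - t) * ⟪ψ' u, y - z⟫) := by
        have : z - u = (-(1-t)) • (y - z) := by rw [hu]; module
        rw [this, real_inner_smul_right]; ring
      have h7 : ⟪ψ' z, u - z⟫ = (1 - t) * ⟪ψ' z, y - z⟫ := by
        rw [huz, real_inner_smul_right]
      have h8 : ‖z - u‖ = (1 - t) * R := by
        rw [← norm_neg]; simp only [neg_sub]; exact hnuz
      rw [inner_sub_left]
      have h1t : 0 < 1 - t := by linarith
      rw [h8] at h5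
      rw [hnuz] at h4
      rw [h6] at h5
      rw [h7] at h4
      nlinarith [sq_nonneg R, sq_nonneg (1 - t)]
    -- strong convexity lower bound on breg difference
    have hsc := hstrong y u
    have hbreg : t * (σ * (1 - t) * R ^ 2) + σ / 2 * (t * R) ^ 2
        ≤ breg ψ ψ' y z - breg ψ ψ' u z := by
      have h9 : ⟪ψ' u, y - u⟫ = t * ⟪ψ' u, y - z⟫ := by
        rw [hyu, real_inner_smul_right]
      have h10 : ⟪ψ' z, y - z⟫ - ⟪ψ' z, u - z⟫ = t * ⟪ψ' z, y - z⟫ := by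
        rw [huz, real_inner_smul_right]; ring
      have h11 : t * (σ * (1 - t) * R ^ 2) ≤ t * ⟪ψ' u - ψ' z, y - z⟫ :=
        mul_le_mul_of_nonneg_left hmono ht0.le
      rw [inner_sub_left] at h11
      rw [hnyu, h9] at hsc
      simp only [breg]
      linarith
    have hfin := hmin u huDom
    have hhzt : t * (h z - h y) ≤ t * (Gh * R) :=
      mul_le_mul_of_nonneg_left hhz ht0.le
    have hA : t * (σ * (1 - t) * R ^ 2) + σ / 2 * (t * R) ^ 2 ≤ t * (Gh * R) := by
      nlinarith [hbreg, hfin, hconvu, hhzt]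
    have heq : t * (σ * (1 - t / 2) * R ^ 2)
        = t * (σ * (1 - t) * R ^ 2) + σ / 2 * (t * R) ^ 2 := by ring
    have hB : t * (σ * (1 - t / 2) * R ^ 2) ≤ t * (Gh * R) := by linarith
    exact le_of_mul_le_mul_left (by linarith) ht0
  -- take t → 0
  have hlim : σ * R ^ 2 ≤ Gh * R := by
    refine le_of_forall_pos_le_add fun ε hε => ?_
    set t := min (ε / (σ * R ^ 2)) (1 / 2) with htdef
    have hden : 0 < σ * R ^ 2 := by positivity
    have ht0 : 0 < t := lt_min (by positivity) (by norm_num)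
    have ht1 : t < 1 := lt_of_le_of_lt (min_le_right _ _) (by norm_num)
    have hk := key t ht0 ht1
    have hts : t * (σ * R ^ 2) ≤ ε := by
      have : t ≤ ε / (σ * R ^ 2) := min_le_left _ _
      calc t * (σ * R ^ 2) ≤ ε / (σ * R ^ 2) * (σ * R ^ 2) :=
            mul_le_mul_of_nonneg_right this hden.le
        _ = ε := by field_simp
    nlinarith
  rw [le_div_iff₀ hσ]
  nlinarith [hlim, hRpos]


end
end
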